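/- Let n ∈ ℕ, let p be a partition of {1, …, 2n}, and let B₁, …, B_n be d×d matrices all of whose entries are 0 or 1, with each row and each column of each B_j containing at most one nonzero entry. Define S(p, d) = Σ δ_{i,p} · b^{(1)}_{i₁,i₂} b^{(2)}_{i₃,i₄} ⋯ b^{(n)}_{i_{2n−1},i_{2n}}, where the sum is over all i = (i₁, …, i_{2n}) ∈ {1, …, d}^{2n}, and δ_{i,p} = 1 if i_k = i_ℓ whenever k and ℓ lie in the same block of p, and δ_{i,p} = 0 otherwise. Let η = {{1,2}, {3,4}, …, {2n−1, 2n}} and set f(d) = max_{1 ≤ j ≤ n} tr_d(B_j). If 2j−1 and 2j lie in the same block of p for some j ∈ {1, …, n}, then S(p, d) ≤ f(d) · d^{|p ∨ η|}. -/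

import Mathlib

open scoped Classical

/-- The partition `η = {{1,2}, {3,4}, …, {2n-1,2n}}` of `{1, …, 2n}` into consecutive pairs
(here `{0,1}, {2,3}, …` on `Fin (2 * n)`), as a setoid. -/
def pairPartition (n : ℕ) : Setoid (Fin (2 * n)) :=
  Setoid.ker fun i => (i : ℕ) / 2

/-- The sum `S(p, d) = Σ_i δ_{i,p} b⁽¹⁾_{i₁,i₂} b⁽²⁾_{i₃,i₄} ⋯ b⁽ⁿ⁾_{i_{2n-1},i_{2n}}` over
all multi-indices `i : Fin (2 * n) → Fin d`, where `δ_{i,p} = 1` if `i` is constant on the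
blocks of `p` and `0` otherwise. -/
noncomputable def partitionSum {n d : ℕ} (p : Setoid (Fin (2 * n)))
    (B : Fin n → Matrix (Fin d) (Fin d) ℝ) : ℝ :=
  ∑ i : Fin (2 * n) → Fin d,
    (if ∀ k l, p.r k l → i k = i l then (1 : ℝ) else 0) *
      ∏ j : Fin n,
        B j (i ⟨2 * j.1, by have := j.isLt; omega⟩)
          (i ⟨2 * j.1 + 1, by have := j.isLt; omega⟩)

/-- Key transfer lemma: along the join `p ⊔ η`, agreement of two admissible index tuples
propagates. -/
lemma key_iff {n d : ℕ} {p : Setoid (Fin (2 * n))}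
    {B : Fin n → Matrix (Fin d) (Fin d) ℝ}
    (hrow : ∀ j k l l', B j k l ≠ 0 → B j k l' ≠ 0 → l = l')
    (hcol : ∀ j k k' l, B j k l ≠ 0 → B j k' l ≠ 0 → k = k')
    {i i' : Fin (2 * n) → Fin d}
    (hi : ∀ k l, p.r k l → i k = i l) (hi' : ∀ k l, p.r k l → i' k = i' l)
    (hnz : ∀ j : Fin n, B j (i ⟨2 * j.1, by have := j.isLt; omega⟩)
      (i ⟨2 * j.1 + 1, by have := j.isLt; omega⟩) ≠ 0)
    (hnz' : ∀ j : Fin n, B j (i' ⟨2 * j.1, by have := j.isLt; omega⟩)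
      (i' ⟨2 * j.1 + 1, by have := j.isLt; omega⟩) ≠ 0)
    {a b : Fin (2 * n)} (hab : (p ⊔ pairPartition n).r a b) :
    (i a = i' a ↔ i b = i' b) := by
  have step : ∀ j : Fin n,
      (i ⟨2 * j.1, by have := j.isLt; omega⟩ = i' ⟨2 * j.1, by have := j.isLt; omega⟩ ↔
       i ⟨2 * j.1 + 1, by have := j.isLt; omega⟩ = i' ⟨2 * j.1 + 1, by have := j.isLt; omega⟩) := by
    intro j
    constructor
    · intro hEq
      refine hrow j _ _ _ (hnz j) ?_
      rw [hEq]; exact hnz' j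
    · intro hEq
      refine hcol j _ _ _ (hnz j) ?_
      rw [hEq]; exact hnz' j
  have hab' : Relation.EqvGen (fun x y => p.r x y ∨ (pairPartition n).r x y) a b := by
    rw [Setoid.sup_eq_eqvGen] at hab; exact hab
  clear hab
  induction hab' with
  | rel x y h =>
    rcases h with h | h
    · rw [hi _ _ h, hi' _ _ h]
    · have h2 : x.1 / 2 = y.1 / 2 := h
      have hx2 := x.isLt
      have hy2 := y.isLt
      have hjn : x.1 / 2 < n := by omega
      set jf : Fin n := ⟨x.1 / 2, hjn⟩ with hjf
      have hx : x.1 = 2 * jf.1 ∨ x.1 = 2 * jf.1 + 1 := by simp only [hjf]; omega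
      have hy : y.1 = 2 * jf.1 ∨ y.1 = 2 * jf.1 + 1 := by simp only [hjf]; omega
      rcases hx with hx | hx <;> rcases hy with hy | hy
      · have : x = y := Fin.ext (by omega)
        rw [this]
      · have hx' : x = ⟨2 * jf.1, by have := jf.isLt; omega⟩ := Fin.ext hx
        have hy' : y = ⟨2 * jf.1 + 1, by have := jf.isLt; omega⟩ := Fin.ext hy
        have hstep := step jf
        rw [← hx', ← hy'] at hstep
        exact hstep
      · have hx' : x = ⟨2 * jf.1 + 1, by have := jf.isLt; omega⟩ := Fin.ext hx
        have hy' : y = ⟨2 * jf.1, by have := jf.isLt; omega⟩ := Fin.ext hy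
        have hstep := (step jf).symm
        rw [← hx', ← hy'] at hstep
        exact hstep
      · have : x = y := Fin.ext (by omega)
        rw [this]
  | refl x => exact Iff.rfl
  | symm x y _ ih => exact ih.symm
  | trans x y z _ _ ih1 ih2 => exact ih1.trans ih2

/-- The summand of `partitionSum`. -/
noncomputable def termF {n d : ℕ} (p : Setoid (Fin (2 * n)))
    (B : Fin n → Matrix (Fin d) (Fin d) ℝ) (i : Fin (2 * n) → Fin d) : ℝ :=
  (if ∀ k l, p.r k l → i k = i l then (1 : ℝ) else 0) *
    ∏ j : Fin n,
      B j (i ⟨2 * j.1, by have := j.isLt; omega⟩)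
        (i ⟨2 * j.1 + 1, by have := j.isLt; omega⟩)

lemma partitionSum_eq_sum_termF {n d : ℕ} (p : Setoid (Fin (2 * n)))
    (B : Fin n → Matrix (Fin d) (Fin d) ℝ) :
    partitionSum p B = ∑ i : Fin (2 * n) → Fin d, termF p B i := rfl

lemma termF_nonneg_le_one {n d : ℕ} (p : Setoid (Fin (2 * n)))
    (B : Fin n → Matrix (Fin d) (Fin d) ℝ)
    (hB : ∀ j k l, B j k l = 0 ∨ B j k l = 1) (i : Fin (2 * n) → Fin d) :
    0 ≤ termF p B i ∧ termF p B i ≤ 1 := by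
  unfold termF
  have hp0 : ∀ j ∈ (Finset.univ : Finset (Fin n)), (0:ℝ) ≤
      B j (i ⟨2 * j.1, by have := j.isLt; omega⟩) (i ⟨2 * j.1 + 1, by have := j.isLt; omega⟩) := by
    intro j _; rcases hB j _ _ with h | h <;> rw [h] <;> norm_num
  have hp1 : ∀ j ∈ (Finset.univ : Finset (Fin n)), B j (i ⟨2 * j.1, by have := j.isLt; omega⟩)
      (i ⟨2 * j.1 + 1, by have := j.isLt; omega⟩) ≤ 1 := by
    intro j _; rcases hB j _ _ with h | h <;> rw [h] <;> norm_num
  have hprod0 : (0:ℝ) ≤ ∏ j : Fin n, B j (i ⟨2 * j.1, by have := j.isLt; omega⟩)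
      (i ⟨2 * j.1 + 1, by have := j.isLt; omega⟩) := Finset.prod_nonneg hp0
  have hprod1 : (∏ j : Fin n, B j (i ⟨2 * j.1, by have := j.isLt; omega⟩)
      (i ⟨2 * j.1 + 1, by have := j.isLt; omega⟩)) ≤ 1 := Finset.prod_le_one hp0 hp1
  constructor
  · apply mul_nonneg _ hprod0
    split <;> norm_num
  · refine le_trans (mul_le_mul (b := (1:ℝ)) ?_ hprod1 hprod0 ?_) (by norm_num)
    · split <;> norm_num
    · norm_num

/-- For a partition `p` of `{1, …, 2n}` and `d × d` matrices `B₁, …, B_n` with entries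
in `{0, 1}` having at most one nonzero entry in each row and each column: if `2j - 1` and
`2j` lie in the same block of `p` for some `j ∈ {1, …, n}`, then
`S(p, d) ≤ f(d) * d ^ |p ∨ η|`, where `f(d) = max_{1 ≤ j ≤ n} tr_d (B_j)` and
`η = {{1,2}, {3,4}, …, {2n-1,2n}}`. -/
theorem partitionSum_le_of_pair (n d : ℕ) (hn : 0 < n) (p : Setoid (Fin (2 * n)))
    (B : Fin n → Matrix (Fin d) (Fin d) ℝ)
    (hB : ∀ j k l, B j k l = 0 ∨ B j k l = 1)
    (hrow : ∀ j k l l', B j k l ≠ 0 → B j k l' ≠ 0 → l = l')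
    (hcol : ∀ j k k' l, B j k l ≠ 0 → B j k' l ≠ 0 → k = k')
    (hpair : ∃ j : Fin n,
      p.r ⟨2 * j.1, by have := j.isLt; omega⟩ ⟨2 * j.1 + 1, by have := j.isLt; omega⟩) :
    partitionSum p B ≤
      (Finset.univ.sup' (Finset.univ_nonempty_iff.mpr ⟨⟨0, hn⟩⟩)
          (fun j : Fin n => Matrix.trace (B j) / d)) *
        (d : ℝ) ^ (Nat.card (Quotient (p ⊔ pairPartition n))) := by
  classical
  obtain ⟨j0, hj0⟩ := hpair
  rcases Nat.eq_zero_or_pos d with hd | hd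
  · -- d = 0
    subst hd
    have hE : IsEmpty (Fin (2 * n) → Fin 0) :=
      ⟨fun f => (f ⟨0, by omega⟩).elim0⟩
    have hL : partitionSum p B = 0 := by
      unfold partitionSum
      rw [Finset.univ_eq_empty, Finset.sum_empty]
    have htr : ∀ j : Fin n, Matrix.trace (B j) = 0 := by
      intro j; simp [Matrix.trace]
    have hsup : (Finset.univ.sup' (Finset.univ_nonempty_iff.mpr ⟨⟨0, hn⟩⟩)
        (fun j : Fin n => Matrix.trace (B j) / (0:ℕ))) = 0 := by
      rw [show (fun j : Fin n => Matrix.trace (B j) / ((0:ℕ):ℝ)) = fun _ => (0:ℝ) from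
        funext fun j => by rw [htr j]; simp]
      exact Finset.sup'_const _ _
    rw [hL, hsup, zero_mul]
  -- main case
  set η := pairPartition n with hη
  set Q := Quotient (p ⊔ η) with hQ
  haveI : Fintype Q := Fintype.ofFinite _
  set a0 : Fin (2 * n) := ⟨2 * j0.1, by have := j0.isLt; omega⟩ with ha0
  set a1 : Fin (2 * n) := ⟨2 * j0.1 + 1, by have := j0.isLt; omega⟩ with ha1
  set q0 : Q := Quotient.mk (p ⊔ η) a0 with hq0
  set s : Q → Fin (2 * n) := fun q => if q = q0 then a0 else q.out with hs
  have hsec : ∀ q : Q, Quotient.mk (p ⊔ η) (s q) = q := by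
    intro q
    by_cases h : q = q0
    · simp [hs, h, hq0]
    · simp [hs, h, Quotient.out_eq]
  set T : Finset (Fin (2 * n) → Fin d) := Finset.univ.filter (fun i => termF p B i ≠ 0) with hT
  -- properties of members of T
  have hTprop : ∀ i ∈ T, (∀ k l, p.r k l → i k = i l) ∧
      (∀ j : Fin n, B j (i ⟨2 * j.1, by have := j.isLt; omega⟩)
        (i ⟨2 * j.1 + 1, by have := j.isLt; omega⟩) ≠ 0) := by
    intro i hi
    rw [hT, Finset.mem_filter] at hi
    have hne := hi.2
    unfold termF at hne
    simp only [ne_eq, mul_eq_zero, not_or] at hne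
    constructor
    · by_contra h
      exact hne.1 (by rw [if_neg h])
    · intro j
      exact Finset.prod_ne_zero_iff.mp hne.2 j (Finset.mem_univ j)
  obtain ⟨D, hD⟩ : ∃ D : Finset (Fin d), D = Finset.univ.filter (fun k => B j0 k k ≠ 0) :=
    ⟨_, rfl⟩
  have ha0D : ∀ i ∈ T, i a0 ∈ D := by
    intro i hi
    obtain ⟨hconst, hnz⟩ := hTprop i hi
    have h1 : i a0 = i a1 := hconst _ _ hj0
    have h2 := hnz j0
    rw [hD, Finset.mem_filter]
    refine ⟨Finset.mem_univ _, ?_⟩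
    have h2' : B j0 (i a0) (i a1) ≠ 0 := h2
    rw [← h1] at h2'
    exact h2'
  -- the injection
  obtain ⟨Φ, hΦ⟩ : ∃ Φ : (Fin (2 * n) → Fin d) → (Fin d × ({q : Q // q ≠ q0} → Fin d)),
      Φ = fun i => (i a0, fun q => i (s q.1)) := ⟨_, rfl⟩
  have hinj : Set.InjOn Φ T := by
    intro i hiT i' hi'T hEq
    simp only [hΦ] at hEq
    obtain ⟨hconst, hnz⟩ := hTprop i hiT
    obtain ⟨hconst', hnz'⟩ := hTprop i' hi'T
    have hfst : i a0 = i' a0 := congrArg Prod.fst hEq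
    have hsnd : ∀ q : {q : Q // q ≠ q0}, i (s q.1) = i' (s q.1) :=
      fun q => congrFun (congrArg Prod.snd hEq) q
    have hall : ∀ q : Q, i (s q) = i' (s q) := by
      intro q
      by_cases h : q = q0
      · rw [hs]; simp only [h, if_pos rfl]; exact hfst
      · exact hsnd ⟨q, h⟩
    funext a
    have hrel : (p ⊔ η).r (s (Quotient.mk (p ⊔ η) a)) a :=
      Quotient.exact (hsec (Quotient.mk (p ⊔ η) a))
    exact (key_iff hrow hcol hconst hconst' hnz hnz' hrel).mp (hall _)
  have hmaps : ∀ i ∈ T, Φ i ∈ D ×ˢ (Finset.univ : Finset ({q : Q // q ≠ q0} → Fin d)) := by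
    intro i hi
    simp only [hΦ]
    rw [Finset.mem_product]
    exact ⟨ha0D i hi, Finset.mem_univ _⟩
  have hcardT : T.card ≤ D.card * d ^ (Fintype.card Q - 1) := by
    have := Finset.card_le_card_of_injOn Φ hmaps hinj
    rw [Finset.card_product] at this
    have hcardfun : (Finset.univ : Finset ({q : Q // q ≠ q0} → Fin d)).card
        = d ^ (Fintype.card Q - 1) := by
      rw [Finset.card_univ, Fintype.card_fun, Fintype.card_fin]
      congr 1
      have h1 : Fintype.card {q : Q // q ≠ q0} = Fintype.card Q - Fintype.card {q : Q // q = q0} :=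
        Fintype.card_subtype_compl _
      rw [h1, Fintype.card_subtype_eq]
    rwa [hcardfun] at this
  -- sum bound
  have hF01 : ∀ i, 0 ≤ termF p B i ∧ termF p B i ≤ 1 := termF_nonneg_le_one p B hB
  have hSle : partitionSum p B ≤ (T.card : ℝ) := by
    have h1 : partitionSum p B = ∑ i ∈ T, termF p B i := by
      rw [hT, Finset.sum_filter_ne_zero, partitionSum_eq_sum_termF]
    rw [h1]
    calc ∑ i ∈ T, termF p B i ≤ T.card • (1:ℝ) :=
          Finset.sum_le_card_nsmul T (termF p B) 1 (fun i _ => (hF01 i).2)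
      _ = T.card := by simp
  -- trace equals D.card
  have htr : Matrix.trace (B j0) = (D.card : ℝ) := by
    have : ∀ k, Matrix.diag (B j0) k = if B j0 k k ≠ 0 then (1:ℝ) else 0 := by
      intro k; rcases hB j0 k k with h | h <;> simp [Matrix.diag, h]
    rw [Matrix.trace]
    rw [Finset.sum_congr rfl (fun k _ => this k), Finset.sum_boole, hD]
  -- final arithmetic
  have hm1 : 1 ≤ Fintype.card Q := Fintype.card_pos_iff.mpr ⟨q0⟩
  have hNat : Nat.card Q = Fintype.card Q := Nat.card_eq_fintype_card
  have hfle : (D.card : ℝ) / d ≤ Finset.univ.sup' (Finset.univ_nonempty_iff.mpr ⟨⟨0, hn⟩⟩)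
      (fun j : Fin n => Matrix.trace (B j) / d) := by
    rw [← htr]
    exact Finset.le_sup' (fun j : Fin n => Matrix.trace (B j) / (d:ℝ)) (Finset.mem_univ j0)
  have hdne : (d:ℝ) ≠ 0 := Nat.cast_ne_zero.mpr hd.ne'
  have hkey : (D.card : ℝ) * (d:ℝ) ^ (Fintype.card Q - 1)
      = ((D.card : ℝ) / d) * (d:ℝ) ^ (Fintype.card Q) := by
    rw [show Fintype.card Q = 1 + (Fintype.card Q - 1) by omega, pow_add, pow_one]
    field_simp
    rw [Nat.add_sub_cancel_left]
  calc partitionSum p B ≤ (T.card : ℝ) := hSle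
    _ ≤ ((D.card * d ^ (Fintype.card Q - 1) : ℕ) : ℝ) := Nat.cast_le.mpr hcardT
    _ = (D.card : ℝ) * (d:ℝ) ^ (Fintype.card Q - 1) := by push_cast; ring
    _ = ((D.card : ℝ) / d) * (d:ℝ) ^ (Fintype.card Q) := hkey
    _ ≤ _ := by
        rw [hNat]
        exact mul_le_mul_of_nonneg_right hfle (by positivity)
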